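/- Fault explanation soundness (irrelevance by inclusion): if {Init} w1 {P}, {P} w2 {R}, and {R} w3 {false} are valid Hoare triples and P ⊑ R, then {Init} w1.w3 {false} is valid; i.e., removing the irrelevant segment w2 still yields a witness of the fault. -/

import Mathlib

/-- Step sequences along a trace (list of symbols). -/
def Steps {C S : Type*} (step : C → S → C → Prop) : C → List S → C → Prop
  | c, [], c' => c = c'
  | c, s :: w, c' => ∃ c'', step c s c'' ∧ Steps step c'' w c'

/-- Hoare validity up to a trace equivalence. -/
def HoareValid {C S : Type*} (step : C → S → C → Prop)
    (equiv : List S → List S → Prop)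
    (P : Set C) (w : List S) (R : Set C) : Prop :=
  ∀ cf ∈ P, ∀ u, equiv u w → ∀ cf', Steps step cf u cf' → cf' ∈ R

theorem Steps.exists_of_append {C S : Type*} {step : C → S → C → Prop} :
    ∀ {u₁ u₂ : List S} {c c' : C}, Steps step c (u₁ ++ u₂) c' →
      ∃ c'', Steps step c u₁ c'' ∧ Steps step c'' u₂ c'
  | [], _, c, _, h => ⟨c, rfl, h⟩
  | _ :: _, _, _, _, ⟨d, hs, h⟩ =>
    let ⟨c'', h₁, h₂⟩ := Steps.exists_of_append h
    ⟨c'', ⟨d, hs, h₁⟩, h₂⟩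

section HoareValid

variable {C S : Type*} {step : C → S → C → Prop} {equiv : List S → List S → Prop}

theorem HoareValid.mono_pre {P P' R : Set C} {w : List S} (hP : P ⊆ P')
    (h : HoareValid step equiv P' w R) : HoareValid step equiv P w R :=
  fun cf hcf => h cf (hP hcf)

theorem HoareValid.append
    (hDecomp : ∀ u w₁ w₂ : List S, equiv u (w₁ ++ w₂) →
      ∃ u₁ u₂, equiv u₁ w₁ ∧ equiv u₂ w₂ ∧ u = u₁ ++ u₂)
    {P Q R : Set C} {w₁ w₂ : List S}
    (h₁ : HoareValid step equiv P w₁ Q) (h₂ : HoareValid step equiv Q w₂ R) :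
    HoareValid step equiv P (w₁ ++ w₂) R := by
  intro cf hcf u hu cf' hsteps
  obtain ⟨u₁, u₂, hu₁, hu₂, rfl⟩ := hDecomp u w₁ w₂ hu
  obtain ⟨c, hs₁, hs₂⟩ := Steps.exists_of_append hsteps
  exact h₂ c (h₁ cf hcf u₁ hu₁ c hs₁) u₂ hu₂ cf' hs₂

end HoareValid

theorem explanation_inclusion_sound_general {C S : Type*}
    (step : C → S → C → Prop) (equiv : List S → List S → Prop)
    (hDecomp : ∀ u w1 w2 : List S, equiv u (w1 ++ w2) →
      ∃ u1 u2, equiv u1 w1 ∧ equiv u2 w2 ∧ u = u1 ++ u2)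
    (Init P R : Set C) (w1 w2 w3 : List S)
    (h1 : HoareValid step equiv Init w1 P)
    (h3 : HoareValid step equiv R w3 (∅ : Set C))
    (hPR : P ⊆ R) :
    HoareValid step equiv Init (w1 ++ w3) (∅ : Set C) :=
  h1.append hDecomp (h3.mono_pre hPR)

/-- Fault explanation soundness (irrelevance by inclusion): if
`{Init} w1 {P}`, `{P} w2 {R}`, and `{R} w3 {false}` are valid and `P ⊑ R`,
then `{Init} w1.w3 {false}` is valid — removing the irrelevant segment `w2`
still yields a witness of the fault. Requires that the trace equivalence
admits decomposition of concatenations. -/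
theorem explanation_inclusion_sound {C S : Type*}
    (step : C → S → C → Prop) (equiv : List S → List S → Prop)
    (hDecomp : ∀ u w1 w2 : List S, equiv u (w1 ++ w2) →
      ∃ u1 u2, equiv u1 w1 ∧ equiv u2 w2 ∧ u = u1 ++ u2)
    (Init P R : Set C) (w1 w2 w3 : List S)
    (h1 : HoareValid step equiv Init w1 P)
    (h2 : HoareValid step equiv P w2 R)
    (h3 : HoareValid step equiv R w3 (∅ : Set C))
    (hPR : P ⊆ R) :
    HoareValid step equiv Init (w1 ++ w3) (∅ : Set C) :=
  explanation_inclusion_sound_general step equiv hDecomp Init P R w1 w2 w3 h1 h3 hPR
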